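/- Let y, z : ℝ → ℝ be three times continuously differentiable with y''(s)² − z''(s)² > 0 for all s, set κ(s) = √(y''(s)² − z''(s)²) and τ(s) = (y''(s)·z'''(s) − y'''(s)·z''(s))/κ(s)², and let α_N(s) = N(s) = (1/κ(s))·(0, y''(s), z''(s)) be the principal normal spherical representation of the admissible pseudo-Galilean curve α(s) = (s, y(s), z(s)). Then the pseudo-Galilean norm of N'(s) equals |τ(s)|; consequently the pseudo-Galilean arc length of α_N from 0 to s equals ∫₀ˢ |τ(u)| du, i.e., the arc length parameter s_N of α_N satisfies ds_N/ds = |τ(s)|. -/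

import Mathlib

/-- The pseudo-Galilean norm of a vector `(0, a, b)` is `√|a² − b²|`. -/
noncomputable def pgNorm (v : Fin 3 → ℝ) : ℝ := Real.sqrt |(v 1) ^ 2 - (v 2) ^ 2|

/-!
Write `Y = y''`, `Z = z''` and `κ = √(Y² − Z²)`. Differentiating `N = κ⁻¹ (0, Y, Z)` and using
`κ κ' = Y Y' − Z Z'` gives `N' = ((Y Z' − Y' Z) / κ³) (0, Z, Y)`: the derivative of the normal is a
multiple of the pseudo-orthogonal vector `(0, Z, Y)`, whose pseudo-Galilean norm is again `κ`.
Hence `‖N'‖ = |Y Z' − Y' Z| / κ² = |τ|`, and since `τ` is continuous the fundamental theorem of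
calculus gives the arc length of `N` and its derivative.
-/

/- Curvature, torsion and principal normal of the curve `(s, y, z)`, as functions of `Y = y''` and
`Z = z''`. -/
noncomputable def pgCurvature (Y Z : ℝ → ℝ) (s : ℝ) : ℝ := √(Y s ^ 2 - Z s ^ 2)

noncomputable def pgTorsion (Y Z : ℝ → ℝ) (s : ℝ) : ℝ :=
  (Y s * deriv Z s - deriv Y s * Z s) / pgCurvature Y Z s ^ 2

noncomputable def pgUnitNormal (Y Z : ℝ → ℝ) (s : ℝ) : Fin 3 → ℝ :=
  (pgCurvature Y Z s)⁻¹ • ![0, Y s, Z s]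

theorem pgNorm_vecCons (x a b : ℝ) : pgNorm ![x, a, b] = √|a ^ 2 - b ^ 2| := rfl

theorem pgNorm_smul (c : ℝ) (v : Fin 3 → ℝ) : pgNorm (c • v) = |c| * pgNorm v := by
  simp only [pgNorm, Pi.smul_apply, smul_eq_mul, mul_pow, ← mul_sub, abs_mul, abs_sq,
    Real.sqrt_mul (sq_nonneg c), Real.sqrt_sq_eq_abs]

theorem hasDerivAt_vecCons₃ {f g h : ℝ → ℝ} {a b c s : ℝ} (hf : HasDerivAt f a s)
    (hg : HasDerivAt g b s) (hh : HasDerivAt h c s) :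
    HasDerivAt (fun u => ![f u, g u, h u]) ![a, b, c] s :=
  hasDerivAt_pi.2 fun i => by fin_cases i <;> assumption

section Admissible

variable {Y Z : ℝ → ℝ} {s : ℝ}

theorem pgCurvature_pos (hpos : 0 < Y s ^ 2 - Z s ^ 2) : 0 < pgCurvature Y Z s :=
  Real.sqrt_pos.2 hpos

theorem sq_pgCurvature (hpos : 0 < Y s ^ 2 - Z s ^ 2) :
    pgCurvature Y Z s ^ 2 = Y s ^ 2 - Z s ^ 2 :=
  Real.sq_sqrt hpos.le

theorem hasDerivAt_pgCurvature {Y' Z' : ℝ} (hY : HasDerivAt Y Y' s) (hZ : HasDerivAt Z Z' s)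
    (hpos : 0 < Y s ^ 2 - Z s ^ 2) :
    HasDerivAt (pgCurvature Y Z) ((Y s * Y' - Z s * Z') / pgCurvature Y Z s) s := by
  have hsq : HasDerivAt (fun u => Y u ^ 2 - Z u ^ 2) (2 * (Y s * Y' - Z s * Z')) s :=
    ((hY.pow 2).sub (hZ.pow 2)).congr_deriv (by push_cast; ring)
  refine (hsq.sqrt hpos.ne').congr_deriv ?_
  have hκ := (pgCurvature_pos hpos).ne'
  unfold pgCurvature at hκ ⊢
  field_simp

theorem hasDerivAt_pgUnitNormal {Y' Z' : ℝ} (hY : HasDerivAt Y Y' s) (hZ : HasDerivAt Z Z' s)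
    (hpos : 0 < Y s ^ 2 - Z s ^ 2) :
    HasDerivAt (pgUnitNormal Y Z)
      (((Y s * Z' - Y' * Z s) / pgCurvature Y Z s ^ 3) • ![0, Z s, Y s]) s := by
  have hN : HasDerivAt (pgUnitNormal Y Z) _ s :=
    ((hasDerivAt_pgCurvature hY hZ hpos).inv (pgCurvature_pos hpos).ne').smul
      (hasDerivAt_vecCons₃ (hasDerivAt_const s 0) hY hZ)
  refine hN.congr_deriv ?_
  have hκ := (pgCurvature_pos hpos).ne'
  have hκsq := sq_pgCurvature hpos
  simp only [Pi.inv_apply, Matrix.smul_cons, Matrix.smul_empty, smul_eq_mul, mul_zero,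
    Matrix.cons_add_cons, Matrix.empty_add_empty, add_zero, Matrix.vecCons_inj, and_true, true_and]
  constructor <;> field_simp
  · linear_combination Y' * hκsq
  · linear_combination Z' * hκsq

theorem pgNorm_deriv_pgUnitNormal (hY : DifferentiableAt ℝ Y s) (hZ : DifferentiableAt ℝ Z s)
    (hpos : 0 < Y s ^ 2 - Z s ^ 2) :
    pgNorm (deriv (pgUnitNormal Y Z) s) = |pgTorsion Y Z s| := by
  have hκ := pgCurvature_pos hpos
  rw [(hasDerivAt_pgUnitNormal hY.hasDerivAt hZ.hasDerivAt hpos).deriv, pgNorm_smul,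
    pgNorm_vecCons, abs_sub_comm, ← sq_pgCurvature hpos, abs_sq, Real.sqrt_sq hκ.le, pgTorsion,
    abs_div, abs_div, abs_of_pos (pow_pos hκ 3), abs_of_pos (pow_pos hκ 2)]
  field_simp

theorem continuous_pgTorsion (hY : ContDiff ℝ 1 Y) (hZ : ContDiff ℝ 1 Z)
    (hpos : ∀ s, 0 < Y s ^ 2 - Z s ^ 2) : Continuous (pgTorsion Y Z) := by
  have hκ : Continuous (pgCurvature Y Z) :=
    ((hY.continuous.pow 2).sub (hZ.continuous.pow 2)).sqrt
  exact ((hY.continuous.mul (hZ.continuous_deriv le_rfl)).sub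
    ((hY.continuous_deriv le_rfl).mul hZ.continuous)).div (hκ.pow 2)
    fun s => pow_ne_zero 2 (pgCurvature_pos (hpos s)).ne'

end Admissible

/-- The pseudo-Galilean norm of `N'(s)` equals `|τ(s)|`; consequently the
pseudo-Galilean arc length of the principal normal spherical representation
`α_N = N` satisfies `s_N(s) = ∫₀ˢ |τ(u)| du`, i.e. `ds_N/ds = |τ(s)|`. -/
theorem pseudo_galilean_normal_spherical_arclength
    (y z κ τ sN : ℝ → ℝ) (αN : ℝ → Fin 3 → ℝ)
    (hy : ContDiff ℝ 3 y) (hz : ContDiff ℝ 3 z)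
    (hadm : ∀ s, 0 < (deriv (deriv y) s) ^ 2 - (deriv (deriv z) s) ^ 2)
    (hκ : ∀ s, κ s = Real.sqrt ((deriv (deriv y) s) ^ 2 - (deriv (deriv z) s) ^ 2))
    (hτ : ∀ s, τ s =
      (deriv (deriv y) s * deriv (deriv (deriv z)) s
        - deriv (deriv (deriv y)) s * deriv (deriv z) s) / (κ s) ^ 2)
    (hαN : ∀ s, αN s = (κ s)⁻¹ • ![0, deriv (deriv y) s, deriv (deriv z) s])
    (hsN : ∀ s, sN s = ∫ u in (0:ℝ)..s, pgNorm (deriv αN u)) :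
    (∀ s, pgNorm (deriv αN s) = |τ s|) ∧
    (∀ s, sN s = ∫ u in (0:ℝ)..s, |τ u|) ∧
    (∀ s, HasDerivAt sN (|τ s|) s) := by
  set Y := deriv (deriv y)
  set Z := deriv (deriv z)
  have hY : ContDiff ℝ 1 Y := hy.deriv'.deriv'
  have hZ : ContDiff ℝ 1 Z := hz.deriv'.deriv'
  obtain rfl : κ = pgCurvature Y Z := funext hκ
  have hτ' : τ = pgTorsion Y Z := funext hτ
  have hαN' : αN = pgUnitNormal Y Z := funext hαN
  have hnorm : ∀ s, pgNorm (deriv αN s) = |τ s| := fun s => by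
    rw [hαN', hτ']
    exact pgNorm_deriv_pgUnitNormal (hY.differentiable one_ne_zero s)
      (hZ.differentiable one_ne_zero s) (hadm s)
  have harc : ∀ s, sN s = ∫ u in (0:ℝ)..s, |τ u| := fun s => by simp only [hsN, hnorm]
  have hτc : Continuous fun s => |τ s| := hτ' ▸ (continuous_pgTorsion hY hZ hadm).abs
  refine ⟨hnorm, harc, fun s => ?_⟩
  rw [funext harc]
  exact (hτc.integral_hasStrictDerivAt 0 s).hasDerivAt
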